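/- Fix an odd integer n ≥ 7 and let H be the 6n × (4n²−2n) block–point incidence matrix of the construction, viewed over GF(2). Then: (i) every column of H has exactly 3 ones and every row of H has exactly 2n−1 ones; (ii) the inner product over ℤ of any two distinct rows of H, and of any two distinct columns of H, is at most 1 (so the associated Tanner graph has girth at least 6); (iii) the rank of H over GF(2) equals 6n−2, so the null space of H has dimension 4n²−8n+2 and the code rate is (4n²−8n+2)/(4n²−2n); and (iv) the minimum Hamming weight of a nonzero vector v ∈ GF(2)^{4n²−2n} with H v = 0 is exactly 6. -/

import Mathlib

def xfun (n j : ℕ) : ℕ := if j < n then 2 * j + 1 else 2 * (j - n)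

def Blk (n j a : ℕ) : Finset ℕ :=
  {a, (j + a) % (2 * n) + 2 * n, (xfun n j + a) % (2 * n) + 4 * n}

abbrev ColIdx (n : ℕ) := {p : Fin (2 * n) × Fin (2 * n) // (p.1 : ℕ) ≠ n}

/-- The 6n × (4n²-2n) block–point incidence matrix over GF(2). -/
def Hmat (n : ℕ) : Matrix (Fin (6 * n)) (ColIdx n) (ZMod 2) :=
  fun i p => if (i : ℕ) ∈ Blk n (p.1.1 : ℕ) (p.1.2 : ℕ) then 1 else 0

/-- The same 0/1 incidence matrix with entries in ℤ, for inner products over ℤ. -/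
def HmatZ (n : ℕ) : Matrix (Fin (6 * n)) (ColIdx n) ℤ :=
  fun i p => if (i : ℕ) ∈ Blk n (p.1.1 : ℕ) (p.1.2 : ℕ) then 1 else 0

/-!
Number the points of group `k ∈ {0, 1, 2}` as `2n·k + r` with `r < 2n`; the block `B_{j,a}`
has the point `a + s` (mod `2n`) in group `k`, where `s = 0, j, x(j)`. Any two of its three points
determine `(j, a)`; for groups 1 and 2 because `j ↦ x(j) - j` is injective away from `j = n`.
This gives the bounds on inner products.

If `u` is in the left kernel of `H` and `f, g, h` are its restrictions to the three groups, then
`f(a) + g(a + j) + h(a + x(j)) = 0`. Comparing `j = 0, 1, 2` shows that `h(a) - h(a + 2)` does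
not depend on `a`; summed over the `n` steps of length 2 around `ℤ/2n` it vanishes, so for `n`
odd `h` is 2-periodic. Then `g` is constant, and comparing `j = 1` with `j = n + 1` makes `h` and
`f` constant too. So the left kernel is 2-dimensional and `rank H = 6n - 2`.

The support of a codeword covers every point an even number of times. Every column has odd weight,
so the support has even size. Each of its blocks shares a point in every group with another of its
blocks, which rules out size 2, and makes a support of size 4 a Pasch configuration. A computation
mod `2n` excludes Pasch configurations for odd `n`. Six blocks covering nine points twice give a
codeword of weight 6.
-/

open Finset Matrix

lemma mod_eq_or_mod_add_eq_of_lt_two_mul {x m : ℕ} (h : x < 2 * m) :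
    x % m = x ∨ x % m + m = x := by
  by_cases hx : x < m
  · exact .inl (Nat.mod_eq_of_lt hx)
  · right
    rw [Nat.mod_eq_sub_mod (by omega), Nat.mod_eq_of_lt (by omega)]
    omega

lemma eq_or_eq_add_or_add_eq_of_mod_eq {x y m : ℕ} (hx : x < 2 * m) (hy : y < 2 * m)
    (h : x % m = y % m) : x = y ∨ x = y + m ∨ x + m = y := by
  rcases mod_eq_or_mod_add_eq_of_lt_two_mul hx with hx' | hx' <;>
    rcases mod_eq_or_mod_add_eq_of_lt_two_mul hy with hy' | hy' <;> omega

lemma mul_add_eq_mul_add_iff {m a b c d : ℕ} (hb : b < m) (hd : d < m) :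
    m * a + b = m * c + d ↔ a = c ∧ b = d := by
  constructor
  · intro h
    have hac : a = c := by
      rcases Nat.lt_trichotomy a c with hlt | heq | hgt
      · nlinarith
      · exact heq
      · nlinarith
    subst hac
    omega
  · rintro ⟨rfl, rfl⟩
    rfl

lemma card_filter_ne_fin (n : ℕ) : #{j : Fin (2 * n) | (j : ℕ) ≠ n} = 2 * n - 1 := by
  rcases n.eq_zero_or_pos with rfl | hn
  · rfl
  rw [show ({j : Fin (2 * n) | (j : ℕ) ≠ n} : Finset _) = univ.erase ⟨n, by omega⟩ by
    ext j; simp [Fin.ext_iff]]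
  simp

lemma sum_boole_mul_boole_le_one {ι : Type*} [Fintype ι] {P Q : ι → Prop} [DecidablePred P]
    [DecidablePred Q] (h : ∀ x y, P x → Q x → P y → Q y → x = y) :
    ∑ x, (if P x then (1 : ℤ) else 0) * (if Q x then 1 else 0) ≤ 1 := by
  simp only [ite_zero_mul_ite_zero, mul_one, sum_boole, Nat.cast_le_one, card_le_one]
  intro x hx y hy
  simp only [mem_filter, mem_univ, true_and] at hx hy
  exact h x y hx.1 hx.2 hy.1 hy.2

lemma mulVec_apply_eq_sum_support {ι κ : Type*} [Fintype κ] (M : Matrix ι κ (ZMod 2))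
    (v : κ → ZMod 2) (i : ι) : (M *ᵥ v) i = ∑ p ∈ {p | v p ≠ 0}, M i p := by
  have h01 : ∀ x : ZMod 2, x ≠ 0 → x = 1 := by decide
  rw [sum_filter, mulVec, dotProduct]
  refine sum_congr rfl fun p _ => ?_
  split_ifs with h
  · rw [h01 _ h, mul_one]
  · rw [not_not.mp h, mul_zero]

lemma ZMod.apply_eq_apply_zero_of_add_one {m : ℕ} [NeZero m] {α : Type*} {F : ZMod m → α}
    (h : ∀ a, F (a + 1) = F a) (a : ZMod m) : F a = F 0 := by
  have hF : Function.Periodic F 1 := h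
  simpa using hF.nsmul_eq a.val

lemma eq_zero_of_sub_apply_add_two {n : ℕ} (hodd : Odd n) {F : ZMod (2 * n) → ZMod 2}
    {d : ZMod 2} (h : ∀ a, F a - F (a + 2) = d) : d = 0 := by
  have key : ∀ k : ℕ, F (2 * k) = F 0 - k * d := by
    intro k
    induction k with
    | zero => simp
    | succ k ih =>
      push_cast
      rw [mul_add_one]
      linear_combination ih - h (2 * k)
  have h2n : (2 * n : ZMod (2 * n)) = 0 := by exact_mod_cast ZMod.natCast_self (2 * n)
  have hn := key n
  rw [h2n, ZMod.natCast_eq_one_iff_odd.mpr hodd, one_mul] at hn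
  linear_combination hn

lemma periodic_two_of_odd {n : ℕ} (hodd : Odd n) {f g h : ZMod (2 * n) → ZMod 2}
    (E0 : ∀ a, f a + g a + h (a + 1) = 0) (E1 : ∀ a, f a + g (a + 1) + h (a + 3) = 0)
    (E2 : ∀ a, f a + g (a + 2) + h (a + 5) = 0) : Function.Periodic h 2 := by
  intro a
  have : NeZero (2 * n) := ⟨by have := hodd.pos; omega⟩
  have hD a : h (a + 2) - h (a + 4) = h (a + 3) - h (a + 5) := by
    have h0 := E0 (a + 1)
    have h1 := E1 (a + 1)
    norm_num only [add_assoc] at h0 h1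
    linear_combination h0 - h1 + E2 a - E1 a
  have hconst := ZMod.apply_eq_apply_zero_of_add_one
    (F := fun a => h (a + 2) - h (a + 4)) fun a => by
      norm_num only [add_assoc]
      exact (hD a).symm
  have hd := eq_zero_of_sub_apply_add_two hodd (F := fun a => h (a + 2)) fun a => by
    norm_num only [add_assoc]
    exact hconst a
  have ha := hconst (a - 2)
  rw [sub_add_cancel, show a - 2 + 4 = a + 2 by ring] at ha
  linear_combination -ha - hd

lemma xfun_cases (n j : ℕ) :
    j < n ∧ xfun n j = 2 * j + 1 ∨ n ≤ j ∧ xfun n j + 2 * n = 2 * j := by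
  unfold xfun
  split <;> omega

namespace ColIdx

variable {n : ℕ}

/-- `B_{j,a}` has the point `(a + shift n j k) % (2n)`, i.e. `pt`, in the `k`-th group of `2n`
points. -/
def shift (n j : ℕ) : Fin 3 → ℕ := ![0, j, xfun n j]

def pt (p : ColIdx n) (k : Fin 3) : ℕ := (shift n p.1.1 k + p.1.2) % (2 * n)

def row (p : ColIdx n) (k : Fin 3) : Fin (6 * n) :=
  ⟨2 * n * k + p.pt k, by
    have := Nat.mod_lt (shift n p.1.1 k + p.1.2) (show 0 < 2 * n by have := p.1.1.isLt; omega)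
    have := k.isLt
    unfold pt
    nlinarith⟩

def group (i : Fin (6 * n)) : Fin 3 :=
  ⟨i / (2 * n), Nat.div_lt_of_lt_mul (by have := i.isLt; linarith)⟩

@[simp] lemma shift_zero (j : ℕ) : shift n j 0 = 0 := rfl
@[simp] lemma shift_one (j : ℕ) : shift n j 1 = j := rfl
@[simp] lemma shift_two (j : ℕ) : shift n j 2 = xfun n j := rfl

lemma shift_lt_of_lt {j : ℕ} (hj : j < 2 * n) (k : Fin 3) : shift n j k < 2 * n := by
  have := xfun_cases n j
  fin_cases k
  · show 0 < 2 * n; omega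
  · exact hj
  · show xfun n j < 2 * n; omega

lemma pt_lt (p : ColIdx n) (k : Fin 3) : p.pt k < 2 * n :=
  Nat.mod_lt _ (by have := p.1.1.isLt; omega)

@[simp] lemma pt_zero (p : ColIdx n) : p.pt 0 = p.1.2 := by
  simp [pt, Nat.mod_eq_of_lt p.1.2.isLt]

lemma shift_add_eq_of_pt_eq {p q : ColIdx n} {k : Fin 3} (h : p.pt k = q.pt k) :
    shift n p.1.1 k + p.1.2 = shift n q.1.1 k + q.1.2 ∨
      shift n p.1.1 k + p.1.2 = shift n q.1.1 k + q.1.2 + 2 * n ∨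
      shift n p.1.1 k + p.1.2 + 2 * n = shift n q.1.1 k + q.1.2 := by
  have := shift_lt_of_lt p.1.1.isLt k; have := shift_lt_of_lt q.1.1.isLt k
  have := p.1.2.isLt; have := q.1.2.isLt
  exact eq_or_eq_add_or_add_eq_of_mod_eq (by omega) (by omega) h

lemma eq_of_pt_eq_pt {p q : ColIdx n} {k l : Fin 3} (hkl : k ≠ l) (hk : p.pt k = q.pt k)
    (hl : p.pt l = q.pt l) : p = q := by
  have hk' := shift_add_eq_of_pt_eq hk
  have hl' := shift_add_eq_of_pt_eq hl
  have := p.1.1.isLt; have := q.1.1.isLt; have := p.1.2.isLt; have := q.1.2.isLt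
  have := p.2; have := q.2
  have := xfun_cases n p.1.1; have := xfun_cases n q.1.1
  have hj : (p.1.1 : ℕ) = q.1.1 ∧ (p.1.2 : ℕ) = q.1.2 := by
    fin_cases k <;> fin_cases l <;>
      simp only [Fin.zero_eta, Fin.mk_one, Fin.reduceFinMk, Fin.isValue, ne_eq, not_true_eq_false,
        shift_zero, shift_one, shift_two, zero_add] at hkl hk' hl' <;> omega
  exact Subtype.ext (Prod.ext (Fin.ext hj.1) (Fin.ext hj.2))

lemma row_eq_row_iff {p q : ColIdx n} {k l : Fin 3} :
    p.row k = q.row l ↔ k = l ∧ p.pt k = q.pt l := by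
  rw [Fin.ext_iff, row, row, mul_add_eq_mul_add_iff (pt_lt p k) (pt_lt q l), Fin.ext_iff]

lemma row_injective (p : ColIdx n) : Function.Injective p.row :=
  fun _ _ h => (row_eq_row_iff.mp h).1

lemma eq_row_iff (i : Fin (6 * n)) (p : ColIdx n) (k : Fin 3) :
    i = p.row k ↔ group i = k ∧ p.pt k = i % (2 * n) := by
  have hr := Nat.mod_lt (i : ℕ) (show 0 < 2 * n by have := i.isLt; omega)
  rw [Fin.ext_iff, Fin.ext_iff]
  change (i : ℕ) = 2 * n * k + p.pt k ↔ (i : ℕ) / (2 * n) = k ∧ _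
  conv_lhs => rw [← Nat.div_add_mod (i : ℕ) (2 * n)]
  rw [mul_add_eq_mul_add_iff hr (pt_lt p k), eq_comm (a := (i : ℕ) % (2 * n))]

lemma group_row (p : ColIdx n) (k : Fin 3) : group (p.row k) = k :=
  ((eq_row_iff _ p k).mp rfl).1

lemma mem_Blk_iff (p : ColIdx n) (i : ℕ) :
    i ∈ Blk n p.1.1 p.1.2 ↔ ∃ k : Fin 3, i = 2 * n * k + p.pt k := by
  simp only [Blk, mem_insert, mem_singleton, Fin.exists_fin_succ, pt, Fin.isValue,
    Fin.coe_ofNat_eq_mod, Nat.zero_mod, mul_zero, shift_zero, zero_add,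
    Nat.mod_eq_of_lt p.1.2.isLt, Fin.val_succ, mul_one, Fin.succ_zero_eq_one, shift_one,
    Fin.val_eq_zero, Nat.reduceAdd, Fin.succ_one_eq_two, shift_two, IsEmpty.exists_iff, or_false]
  omega

lemma Hmat_apply (i : Fin (6 * n)) (p : ColIdx n) :
    Hmat n i p = if ∃ k, i = p.row k then 1 else 0 := by
  simp [Hmat, mem_Blk_iff, row, Fin.ext_iff]

lemma Hmat_eq_one_iff {i : Fin (6 * n)} {p : ColIdx n} :
    Hmat n i p = 1 ↔ ∃ k, i = p.row k := by
  rw [Hmat_apply]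
  split_ifs with h <;> simp [h]

lemma Hmat_row (p q : ColIdx n) (k : Fin 3) :
    Hmat n (p.row k) q = if q.pt k = p.pt k then 1 else 0 := by
  simp [Hmat_apply, row_eq_row_iff, eq_comm]

lemma card_filter_Hmat_col (p : ColIdx n) : #{i | Hmat n i p = 1} = 3 := by
  rw [show ({i | Hmat n i p = 1} : Finset _) = univ.image p.row by
      ext i; simp [Hmat_eq_one_iff, eq_comm],
    card_image_of_injective _ p.row_injective, card_univ, Fintype.card_fin]

lemma card_filter_pt_eq (k : Fin 3) {r : ℕ} (hr : r < 2 * n) :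
    #{p : ColIdx n | p.pt k = r} = 2 * n - 1 := by
  rw [← card_filter_ne_fin n]
  refine card_bij (fun p _ => p.1.1) (fun p _ => by simpa using p.2) ?_ ?_
  · intro p hp q hq hpq
    simp only [mem_filter, mem_univ, true_and] at hp hq
    have hpt := shift_add_eq_of_pt_eq (hp.trans hq.symm)
    have := p.1.2.isLt; have := q.1.2.isLt
    rw [hpq] at hpt
    exact Subtype.ext (Prod.ext hpq (Fin.ext (by omega)))
  · intro j hj
    simp only [mem_filter, mem_univ, true_and] at hj
    have hs := shift_lt_of_lt (n := n) j.isLt k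
    have hpt : (shift n j k + (r + 2 * n - shift n j k) % (2 * n)) % (2 * n) = r := by
      rw [Nat.add_mod_mod, show shift n j k + (r + 2 * n - shift n j k) = r + 2 * n by omega,
        Nat.add_mod_right, Nat.mod_eq_of_lt hr]
    exact ⟨⟨(j, ⟨(r + 2 * n - shift n j k) % (2 * n), Nat.mod_lt _ (by omega)⟩), hj⟩,
      mem_filter.mpr ⟨mem_univ _, hpt⟩, rfl⟩

lemma card_filter_Hmat_row (i : Fin (6 * n)) : #{p | Hmat n i p = 1} = 2 * n - 1 := by
  rw [← card_filter_pt_eq (group i) (Nat.mod_lt (i : ℕ) (by have := i.isLt; omega))]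
  congr 1
  ext p
  simp [Hmat_eq_one_iff, eq_row_iff]

lemma eq_of_Hmat_eq_one {i i' : Fin (6 * n)} {p q : ColIdx n} (hii' : i ≠ i')
    (hp : Hmat n i p = 1) (hp' : Hmat n i' p = 1) (hq : Hmat n i q = 1)
    (hq' : Hmat n i' q = 1) : p = q := by
  obtain ⟨k, rfl⟩ := Hmat_eq_one_iff.mp hp
  obtain ⟨l, rfl⟩ := Hmat_eq_one_iff.mp hp'
  obtain ⟨k', hk'⟩ := Hmat_eq_one_iff.mp hq
  obtain ⟨l', hl'⟩ := Hmat_eq_one_iff.mp hq'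
  obtain ⟨rfl, hk⟩ := row_eq_row_iff.mp hk'
  obtain ⟨rfl, hl⟩ := row_eq_row_iff.mp hl'
  exact eq_of_pt_eq_pt (fun h => hii' (congrArg p.row h)) hk hl

lemma HmatZ_eq_ite (i : Fin (6 * n)) (p : ColIdx n) :
    HmatZ n i p = if Hmat n i p = 1 then 1 else 0 := by
  unfold HmatZ Hmat
  split_ifs <;> simp_all

lemma sum_HmatZ_row_mul_le_one {i i' : Fin (6 * n)} (hii' : i ≠ i') :
    ∑ p, HmatZ n i p * HmatZ n i' p ≤ 1 := by
  simp only [HmatZ_eq_ite]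
  exact sum_boole_mul_boole_le_one fun p q hp hp' hq hq' => eq_of_Hmat_eq_one hii' hp hp' hq hq'

lemma sum_HmatZ_col_mul_le_one {p q : ColIdx n} (hpq : p ≠ q) :
    ∑ i, HmatZ n i p * HmatZ n i q ≤ 1 := by
  simp only [HmatZ_eq_ite]
  exact sum_boole_mul_boole_le_one fun i i' hp hq hp' hq' =>
    by_contra fun hii' => hpq (eq_of_Hmat_eq_one hii' hp hp' hq hq')

lemma sum_Hmat_mul (p : ColIdx n) (u : Fin (6 * n) → ZMod 2) :
    ∑ i, Hmat n i p * u i = ∑ k, u (p.row k) := by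
  have h i : (∃ k, i = p.row k) ↔ i ∈ univ.image p.row := by simp [eq_comm]
  simp_rw [Hmat_apply, ite_mul, one_mul, zero_mul, h]
  rw [sum_ite_mem, univ_inter, sum_image fun _ _ _ _ h => p.row_injective h]

lemma mem_ker_transpose_iff (u : Fin (6 * n) → ZMod 2) :
    u ∈ LinearMap.ker (Hmat n)ᵀ.mulVecLin ↔ ∀ p : ColIdx n, ∑ k, u (p.row k) = 0 := by
  simp only [LinearMap.mem_ker, mulVecLin_apply, funext_iff, Pi.zero_apply, mulVec, dotProduct,
    transpose_apply, sum_Hmat_mul]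

lemma apply_eq_apply_zero_of_sum_apply_shift (hn : 3 ≤ n) (hodd : Odd n)
    {F : Fin 3 → ZMod (2 * n) → ZMod 2}
    (hF : ∀ j < 2 * n, j ≠ n → ∀ a, ∑ k, F k (shift n j k + a) = 0) (k : Fin 3)
    (a : ZMod (2 * n)) : F k a = F k 0 := by
  have : NeZero (2 * n) := ⟨by omega⟩
  have E : ∀ j < 2 * n, j ≠ n → ∀ a, F 0 a + F 1 (a + j) + F 2 (a + xfun n j) = 0 := by
    intro j hj hjn a
    simpa [Fin.sum_univ_three, add_comm] using hF j hj hjn a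
  have E0 a : F 0 a + F 1 a + F 2 (a + 1) = 0 := by
    simpa [xfun, show 0 < n by omega] using E 0 (by omega) (by omega) a
  have E1 a : F 0 a + F 1 (a + 1) + F 2 (a + 3) = 0 := by
    simpa [xfun, show 1 < n by omega] using E 1 (by omega) (by omega) a
  have E2 a : F 0 a + F 1 (a + 2) + F 2 (a + 5) = 0 := by
    simpa [xfun, show 2 < n by omega] using E 2 (by omega) (by omega) a
  have En a : F 0 a + F 1 (a + (n + 1 : ℕ)) + F 2 (a + 2) = 0 := by
    simpa [xfun] using E (n + 1) (by omega) (by omega) a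
  have hH2 := periodic_two_of_odd hodd E0 E1 E2
  have hG a : F 1 a = F 1 0 := by
    refine ZMod.apply_eq_apply_zero_of_add_one (fun a => ?_) a
    have h := hH2 (a + 1)
    norm_num only [add_assoc] at h
    linear_combination E1 a - E0 a - h
  have hH a : F 2 a = F 2 0 := by
    refine ZMod.apply_eq_apply_zero_of_add_one (fun c => ?_) a
    have h1 := E1 (c - 2)
    have h2 := En (c - 2)
    rw [show c - 2 + 3 = c + 1 by ring] at h1
    rw [sub_add_cancel] at h2
    linear_combination h1 - h2 - hG (c - 2 + 1) + hG (c - 2 + (n + 1 : ℕ))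
  fin_cases k
  · show F 0 a = F 0 0
    linear_combination E0 a - E0 0 - hG a - hH (a + 1) + hH (0 + 1)
  · exact hG a
  · exact hH a

section rowAt

variable [NeZero n]

def rowAt (k : Fin 3) (z : ZMod (2 * n)) : Fin (6 * n) :=
  ⟨2 * n * k + z.val, by have := z.val_lt; have := k.isLt; nlinarith⟩

lemma row_eq_rowAt (p : ColIdx n) (k : Fin 3) :
    p.row k = rowAt k (((shift n p.1.1 k : ℕ) : ZMod (2 * n)) + ((p.1.2 : ℕ) : ZMod (2 * n))) := by
  simp only [row, rowAt, pt, ← Nat.cast_add, ZMod.val_natCast]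

lemma eq_rowAt_group (i : Fin (6 * n)) : i = rowAt (group i) ((i : ℕ) : ZMod (2 * n)) := by
  ext
  simp only [rowAt, group, ZMod.val_natCast]
  exact (Nat.div_add_mod _ _).symm

lemma group_rowAt (k : Fin 3) (z : ZMod (2 * n)) : group (rowAt k z) = k := by
  ext
  simp only [rowAt, group]
  rw [Nat.mul_add_div (by have := NeZero.ne n; omega), Nat.div_eq_of_lt z.val_lt, add_zero]

lemma apply_eq_apply_rowAt_group_zero (hn : 3 ≤ n) (hodd : Odd n) {u : Fin (6 * n) → ZMod 2}
    (hu : u ∈ LinearMap.ker (Hmat n)ᵀ.mulVecLin) (i : Fin (6 * n)) :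
    u i = u (rowAt (group i) 0) := by
  rw [mem_ker_transpose_iff] at hu
  conv_lhs => rw [eq_rowAt_group i]
  refine apply_eq_apply_zero_of_sum_apply_shift hn hodd (F := fun k z => u (rowAt k z))
    (fun j hj hjn a => ?_) _ _
  simpa only [row_eq_rowAt, ZMod.natCast_zmod_val] using hu ⟨(⟨j, hj⟩, ⟨a.val, a.val_lt⟩), hjn⟩

end rowAt

lemma finrank_ker_transpose (hn : 3 ≤ n) (hodd : Odd n) :
    Module.finrank (ZMod 2) (LinearMap.ker (Hmat n)ᵀ.mulVecLin) = 2 := by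
  have : NeZero n := ⟨by omega⟩
  set K := LinearMap.ker (Hmat n)ᵀ.mulVecLin
  let Φ : K →ₗ[ZMod 2] ZMod 2 × ZMod 2 :=
    ((LinearMap.proj (rowAt 1 0)).comp K.subtype).prod ((LinearMap.proj (rowAt 2 0)).comp K.subtype)
  have hΦ : Function.Bijective Φ := by
    constructor
    · rw [← LinearMap.ker_eq_bot, LinearMap.ker_eq_bot']
      rintro ⟨u, hu⟩ hΦu
      have h1 : u (rowAt 1 0) = 0 := congrArg Prod.fst hΦu
      have h2 : u (rowAt 2 0) = 0 := congrArg Prod.snd hΦu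
      have h0 := (mem_ker_transpose_iff u).mp hu
        ⟨(⟨0, by omega⟩, ⟨0, by omega⟩), show 0 ≠ n by omega⟩
      simp only [Fin.sum_univ_three, apply_eq_apply_rowAt_group_zero hn hodd hu (row _ _),
        group_row, h1, h2, add_zero] at h0
      refine Subtype.ext (funext fun i => ?_)
      change u i = 0
      rw [apply_eq_apply_rowAt_group_zero hn hodd hu i]
      generalize group i = k
      fin_cases k <;> assumption
    · rintro ⟨c₁, c₂⟩
      let w : Fin (6 * n) → ZMod 2 := fun i => ![c₁ + c₂, c₁, c₂] (group i)
      have hw : w ∈ K := by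
        refine (mem_ker_transpose_iff w).mpr fun p => ?_
        simp only [w, group_row, Fin.sum_univ_three, Fin.isValue, cons_val_zero, cons_val_one,
          Matrix.cons_val]
        ring_nf
        reduce_mod_char
      exact ⟨⟨w, hw⟩, Prod.ext (by simp [Φ, w, group_rowAt]) (by simp [Φ, w, group_rowAt])⟩
  rw [(LinearEquiv.ofBijective Φ hΦ).finrank_eq]
  simp

def IsEvenCover (S : Finset (ColIdx n)) : Prop := ∀ i, ∑ p ∈ S, Hmat n i p = 0

/-- A Pasch configuration: four blocks on six points, each point on exactly two of them. -/
def IsPasch (p₁ p₂ p₃ p₄ : ColIdx n) : Prop :=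
  p₁.pt 0 = p₂.pt 0 ∧ p₃.pt 0 = p₄.pt 0 ∧ p₁.pt 1 = p₃.pt 1 ∧ p₂.pt 1 = p₄.pt 1 ∧
    p₁.pt 2 = p₄.pt 2 ∧ p₂.pt 2 = p₃.pt 2

lemma isEvenCover_support {v : ColIdx n → ZMod 2} (hv : Hmat n *ᵥ v = 0) :
    IsEvenCover {p | v p ≠ 0} := fun i => by
  rw [← mulVec_apply_eq_sum_support, hv, Pi.zero_apply]

lemma isEvenCover_iff {S : Finset (ColIdx n)} :
    IsEvenCover S ↔ ∀ p ∈ S, ∀ k, Even #{q ∈ S | q.pt k = p.pt k} := by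
  simp only [← ZMod.natCast_eq_zero_iff_even]
  constructor
  · intro hS p _ k
    simpa only [Hmat_row, sum_boole] using hS (p.row k)
  · intro h i
    by_cases hi : ∃ p ∈ S, ∃ k, i = p.row k
    · obtain ⟨p, hp, k, rfl⟩ := hi
      simpa only [Hmat_row, sum_boole] using h p hp k
    · refine sum_eq_zero fun q hq => ?_
      rw [Hmat_apply, if_neg fun ⟨k, hk⟩ => hi ⟨q, hq, k, hk⟩]

/-- With `d = a₃ - a₁` and `ε = [j < n]`, the equations force `2d ≡ ε₃ + ε₄ - ε₁ - ε₂` and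
`d ≡ ε₁ + ε₄ ≡ ε₂ + ε₃ (mod 2)`, which leaves no solution with `j₃ ≠ j₄` when `n` is odd. -/
lemma not_isPasch (hodd : Odd n) {p₁ p₂ p₃ p₄ : ColIdx n} (h34 : p₃ ≠ p₄) :
    ¬ IsPasch p₁ p₂ p₃ p₄ := by
  rintro ⟨e12, e34, e13, e24, e14, e23⟩
  rw [pt_zero, pt_zero] at e12 e34
  have hj34 : (p₃.1.1 : ℕ) ≠ p₄.1.1 := fun h =>
    h34 (Subtype.ext (Prod.ext (Fin.ext h) (Fin.ext e34)))
  have e13' := shift_add_eq_of_pt_eq e13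
  have e24' := shift_add_eq_of_pt_eq e24
  have e14' := shift_add_eq_of_pt_eq e14
  have e23' := shift_add_eq_of_pt_eq e23
  simp only [shift_one, shift_two] at e13' e24' e14' e23'
  have := p₁.1.1.isLt; have := p₂.1.1.isLt; have := p₃.1.1.isLt; have := p₄.1.1.isLt
  have := p₁.1.2.isLt; have := p₃.1.2.isLt
  obtain ⟨m, rfl⟩ := hodd
  rcases xfun_cases (2 * m + 1) p₁.1.1 with h1 | h1 <;>
    rcases xfun_cases (2 * m + 1) p₂.1.1 with h2 | h2 <;>
    rcases xfun_cases (2 * m + 1) p₃.1.1 with h3 | h3 <;>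
    rcases xfun_cases (2 * m + 1) p₄.1.1 with h4 | h4 <;> omega

namespace IsEvenCover

variable {S : Finset (ColIdx n)}

lemma even_card (hS : IsEvenCover S) : Even S.card := by
  have hcol p : ∑ i, Hmat n i p = 1 :=
    (by simpa using sum_Hmat_mul p 1 : ∑ i, Hmat n i p = 3).trans (by decide)
  rw [← ZMod.natCast_eq_zero_iff_even]
  calc (#S : ZMod 2) = ∑ p ∈ S, ∑ i, Hmat n i p := by simp [hcol]
    _ = ∑ i, ∑ p ∈ S, Hmat n i p := sum_comm
    _ = 0 := sum_eq_zero fun i _ => hS i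

lemma exists_partner (hS : IsEvenCover S) {p : ColIdx n} (hp : p ∈ S) (k : Fin 3) :
    ∃ q ∈ S, q ≠ p ∧ q.pt k = p.pt k := by
  have hp' : p ∈ S.filter (fun q => q.pt k = p.pt k) := mem_filter.mpr ⟨hp, rfl⟩
  have hcard : 1 < #(S.filter fun q => q.pt k = p.pt k) := by
    obtain ⟨m, hm⟩ := isEvenCover_iff.mp hS p hp k
    have := card_pos.mpr ⟨p, hp'⟩
    omega
  obtain ⟨q, hq, hqp⟩ := exists_mem_ne hcard p
  exact ⟨q, (mem_filter.mp hq).1, hqp, (mem_filter.mp hq).2⟩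

lemma card_ne_two (hS : IsEvenCover S) : S.card ≠ 2 := by
  intro h2
  obtain ⟨p, q, hpq, rfl⟩ := card_eq_two.mp h2
  have partner k : q.pt k = p.pt k := by
    obtain ⟨r, hr, hrp, e⟩ := hS.exists_partner (mem_insert_self p {q}) k
    rcases mem_insert.mp hr with rfl | hr
    · exact absurd rfl hrp
    · rwa [mem_singleton.mp hr] at e
  exact hpq (eq_of_pt_eq_pt (by decide : (0 : Fin 3) ≠ 1) (partner 0).symm (partner 1).symm)

lemma exists_eq_partners (hS : IsEvenCover S) (h4 : S.card = 4) :
    ∃ p₁ p₂ p₃ p₄ : ColIdx n, S = {p₁, p₂, p₃, p₄} ∧ p₂ ≠ p₁ ∧ p₃ ≠ p₁ ∧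
      p₂.pt 0 = p₁.pt 0 ∧ p₃.pt 1 = p₁.pt 1 ∧ p₄.pt 2 = p₁.pt 2 := by
  obtain ⟨p₁, hp₁⟩ := card_pos.mp (show 0 < S.card by omega)
  obtain ⟨p₂, hp₂, h21, e12⟩ := hS.exists_partner hp₁ 0
  obtain ⟨p₃, hp₃, h31, e13⟩ := hS.exists_partner hp₁ 1
  obtain ⟨p₄, hp₄, h41, e14⟩ := hS.exists_partner hp₁ 2
  have h23 : p₂ ≠ p₃ := by
    rintro rfl; exact h21 (eq_of_pt_eq_pt (by decide : (0 : Fin 3) ≠ 1) e12 e13)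
  have h24 : p₂ ≠ p₄ := by
    rintro rfl; exact h21 (eq_of_pt_eq_pt (by decide : (0 : Fin 3) ≠ 2) e12 e14)
  have h34 : p₃ ≠ p₄ := by
    rintro rfl; exact h31 (eq_of_pt_eq_pt (by decide : (1 : Fin 3) ≠ 2) e13 e14)
  refine ⟨p₁, p₂, p₃, p₄, (eq_of_subset_of_card_le ?_ ?_).symm, h21, h31, e12, e13, e14⟩
  · simp [insert_subset_iff, hp₁, hp₂, hp₃, hp₄]
  · rw [h4, card_insert_of_notMem (by simp [h21.symm, h31.symm, h41.symm]),
      card_insert_of_notMem (by simp [h23, h24]), card_pair h34]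

lemma exists_isPasch (hS : IsEvenCover S) (h4 : S.card = 4) :
    ∃ p₁ p₂ p₃ p₄ : ColIdx n, p₃ ≠ p₄ ∧ IsPasch p₁ p₂ p₃ p₄ := by
  obtain ⟨p₁, p₂, p₃, p₄, rfl, h21, h31, e12, e13, e14⟩ := hS.exists_eq_partners h4
  have h01 : (0 : Fin 3) ≠ 1 := by decide
  have h02 : (0 : Fin 3) ≠ 2 := by decide
  have h34 : p₃ ≠ p₄ := by
    rintro rfl; exact h31 (eq_of_pt_eq_pt (by decide : (1 : Fin 3) ≠ 2) e13 e14)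
  refine ⟨p₁, p₂, p₃, p₄, h34, e12.symm, ?_, e13.symm, ?_, e14.symm, ?_⟩
  · obtain ⟨q, hq, hq3, e⟩ := hS.exists_partner (by simp) (0 : Fin 3) (p := p₃)
    simp only [mem_insert, mem_singleton] at hq
    rcases hq with rfl | rfl | rfl | rfl
    · exact absurd (eq_of_pt_eq_pt h01 e.symm e13) h31
    · exact absurd (eq_of_pt_eq_pt h01 (e.symm.trans e12) e13) h31
    · exact absurd rfl hq3
    · exact e.symm
  · obtain ⟨q, hq, hq2, e⟩ := hS.exists_partner (by simp) (1 : Fin 3) (p := p₂)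
    simp only [mem_insert, mem_singleton] at hq
    rcases hq with rfl | rfl | rfl | rfl
    · exact absurd (eq_of_pt_eq_pt h01 e12 e.symm) h21
    · exact absurd rfl hq2
    · exact absurd (eq_of_pt_eq_pt h01 e12 (e.symm.trans e13)) h21
    · exact e.symm
  · obtain ⟨q, hq, hq2, e⟩ := hS.exists_partner (by simp) (2 : Fin 3) (p := p₂)
    simp only [mem_insert, mem_singleton] at hq
    rcases hq with rfl | rfl | rfl | rfl
    · exact absurd (eq_of_pt_eq_pt h02 e12 e.symm) h21
    · exact absurd rfl hq2
    · exact e.symm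
    · exact absurd (eq_of_pt_eq_pt h02 e12 (e.symm.trans e14)) h21

lemma six_le_card (hodd : Odd n) (hS : IsEvenCover S) (hne : S.Nonempty) : 6 ≤ S.card := by
  obtain ⟨m, hm⟩ := hS.even_card
  have h0 := hne.card_pos
  have h2 := hS.card_ne_two
  have h4 : S.card ≠ 4 := fun h4 => by
    obtain ⟨_, _, _, _, h34, hP⟩ := hS.exists_isPasch h4
    exact not_isPasch hodd h34 hP
  omega

end IsEvenCover

/-- The parameters `(j, a)` of six blocks covering nine points twice each; their intersection
graph is `K₃,₃`. -/
def k33Blocks : Fin 6 → ℕ × ℕ := ![(3, 0), (4, 0), (1, 2), (3, 2), (0, 4), (1, 4)]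

lemma exists_isEvenCover_card_eq_six (hn : 5 ≤ n) :
    ∃ S : Finset (ColIdx n), IsEvenCover S ∧ S.card = 6 := by
  have hsmall : ∀ t, (k33Blocks t).1 ≤ 4 ∧ 2 * (k33Blocks t).1 + 1 + (k33Blocks t).2 ≤ 9 := by decide
  let w : Fin 6 → ColIdx n := fun t =>
    ⟨(⟨(k33Blocks t).1, by have := hsmall t; omega⟩, ⟨(k33Blocks t).2, by have := hsmall t; omega⟩),
      by have := hsmall t; show (k33Blocks t).1 ≠ n; omega⟩
  have hinj : Function.Injective w := fun s t h => by
    have key : ∀ s t : Fin 6, k33Blocks s = k33Blocks t → s = t := by decide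
    exact key s t (Prod.ext (congrArg (fun p : ColIdx n => (p.1.1 : ℕ)) h)
      (congrArg (fun p : ColIdx n => (p.1.2 : ℕ)) h))
  have hpt t k : (w t).pt k = ![0, (k33Blocks t).1, 2 * (k33Blocks t).1 + 1] k + (k33Blocks t).2 := by
    have := hsmall t
    have hx : xfun n (k33Blocks t).1 = 2 * (k33Blocks t).1 + 1 := if_pos (by omega)
    fin_cases k <;>
      simp only [pt, w, hx, Fin.zero_eta, Fin.mk_one, Fin.reduceFinMk, Fin.isValue, shift_zero,
        shift_one, shift_two, zero_add, Nat.succ_eq_add_one, Nat.reduceAdd, Matrix.cons_val,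
        cons_val_zero, cons_val_one] <;>
      exact Nat.mod_eq_of_lt (by omega)
  have hcount : ∀ k t, #{s | ![0, (k33Blocks s).1, 2 * (k33Blocks s).1 + 1] k + (k33Blocks s).2 =
      ![0, (k33Blocks t).1, 2 * (k33Blocks t).1 + 1] k + (k33Blocks t).2} = 2 := by decide
  refine ⟨univ.image w, isEvenCover_iff.mpr ?_, by rw [card_image_of_injective _ hinj]; rfl⟩
  simp only [mem_image, mem_univ, true_and, forall_exists_index, forall_apply_eq_imp_iff]
  intro t k
  rw [filter_image, card_image_of_injective _ hinj]
  simp only [hpt, hcount]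
  decide

lemma six_le_card_support (hodd : Odd n) {v : ColIdx n → ZMod 2} (hv0 : v ≠ 0)
    (hv : Hmat n *ᵥ v = 0) : 6 ≤ #{p | v p ≠ 0} := by
  obtain ⟨p, hp⟩ := Function.ne_iff.mp hv0
  exact (isEvenCover_support hv).six_le_card hodd ⟨p, by simpa using hp⟩

lemma exists_codeword_card_support_eq_six (hn : 5 ≤ n) :
    ∃ v : ColIdx n → ZMod 2, v ≠ 0 ∧ Hmat n *ᵥ v = 0 ∧ #{p | v p ≠ 0} = 6 := by
  obtain ⟨S, hS, h6⟩ := exists_isEvenCover_card_eq_six hn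
  have hsupp : ({p | (if p ∈ S then 1 else 0 : ZMod 2) ≠ 0} : Finset _) = S := by
    ext
    simp
  refine ⟨fun p => if p ∈ S then 1 else 0, fun h => ?_, ?_, by rw [hsupp, h6]⟩
  · obtain ⟨p, hp⟩ := card_pos.mp (show 0 < S.card by omega)
    simpa [hp] using congrFun h p
  · funext i
    rw [mulVec_apply_eq_sum_support, hsupp]
    exact hS i

end ColIdx

lemma card_colIdx (n : ℕ) : Fintype.card (ColIdx n) = 4 * n ^ 2 - 2 * n := by
  rw [Fintype.card_subtype, ← univ_product_univ,
    filter_product_left fun j : Fin (2 * n) => (j : ℕ) ≠ n, card_product,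
    card_filter_ne_fin, card_univ, Fintype.card_fin, Nat.sub_mul]
  congr 1 <;> ring

lemma rank_Hmat {n : ℕ} (hn : 3 ≤ n) (hodd : Odd n) : (Hmat n).rank = 6 * n - 2 := by
  have h := LinearMap.finrank_range_add_finrank_ker (Hmat n)ᵀ.mulVecLin
  rw [ColIdx.finrank_ker_transpose hn hodd, Module.finrank_fin_fun] at h
  rw [← rank_transpose, Matrix.rank]
  omega

lemma finrank_ker_Hmat {n : ℕ} (hn : 3 ≤ n) (hodd : Odd n) :
    Module.finrank (ZMod 2) (LinearMap.ker (Hmat n).mulVecLin) = 4 * n ^ 2 - 8 * n + 2 := by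
  have h := LinearMap.finrank_range_add_finrank_ker (Hmat n).mulVecLin
  rw [Module.finrank_fintype_fun_eq_card, card_colIdx, ← Matrix.rank, rank_Hmat hn hodd] at h
  have : 3 * n ≤ n ^ 2 := by nlinarith
  omega

theorem stmt17 (n : ℕ) (hn : 7 ≤ n) (hodd : Odd n) :
    -- (i) every column of H has exactly 3 ones and every row exactly 2n-1 ones
    (∀ p : ColIdx n,
      (Finset.univ.filter fun i : Fin (6 * n) => Hmat n i p = 1).card = 3) ∧
    (∀ i : Fin (6 * n),
      (Finset.univ.filter fun p : ColIdx n => Hmat n i p = 1).card = 2 * n - 1) ∧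
    -- (ii) inner products over ℤ of distinct rows, and of distinct columns, are ≤ 1
    (∀ i i' : Fin (6 * n), i ≠ i' →
      (∑ p : ColIdx n, HmatZ n i p * HmatZ n i' p) ≤ 1) ∧
    (∀ p p' : ColIdx n, p ≠ p' →
      (∑ i : Fin (6 * n), HmatZ n i p * HmatZ n i p') ≤ 1) ∧
    -- (iii) the rank of H over GF(2) is 6n-2, the null space has dimension 4n²-8n+2,
    -- and the rate is (4n²-8n+2)/(4n²-2n)
    (Hmat n).rank = 6 * n - 2 ∧
    Module.finrank (ZMod 2) (LinearMap.ker (Hmat n).mulVecLin) = 4 * n ^ 2 - 8 * n + 2 ∧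
    ((4 * n ^ 2 - 2 * n : ℚ) - ((Hmat n).rank : ℚ)) / (4 * n ^ 2 - 2 * n : ℚ) =
      ((4 * n ^ 2 - 8 * n + 2 : ℕ) : ℚ) / (4 * n ^ 2 - 2 * n : ℚ) ∧
    -- (iv) the minimum Hamming weight of a nonzero codeword is exactly 6
    (∀ v : ColIdx n → ZMod 2, v ≠ 0 → (Hmat n).mulVec v = 0 →
      6 ≤ (Finset.univ.filter fun p : ColIdx n => v p ≠ 0).card) ∧
    (∃ v : ColIdx n → ZMod 2, v ≠ 0 ∧ (Hmat n).mulVec v = 0 ∧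
      (Finset.univ.filter fun p : ColIdx n => v p ≠ 0).card = 6) := by
  have hrank := rank_Hmat (by omega) hodd
  refine ⟨ColIdx.card_filter_Hmat_col, ColIdx.card_filter_Hmat_row,
    fun _ _ => ColIdx.sum_HmatZ_row_mul_le_one, fun _ _ => ColIdx.sum_HmatZ_col_mul_le_one,
    hrank, finrank_ker_Hmat (by omega) hodd, ?_, fun _ => ColIdx.six_le_card_support hodd,
    ColIdx.exists_codeword_card_support_eq_six (by omega)⟩
  have : 8 * n ≤ 4 * n ^ 2 := by nlinarith
  rw [hrank, Nat.cast_sub (by omega), Nat.cast_add, Nat.cast_sub this]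
  push_cast
  ring
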